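/- Let a ∈ ℝ ∪ {−∞} and let φ : (a,∞) → ℝ be smooth with φ'(t) > 0 and φ''(t) ≥ 0 for all t, and assume φ' has at most linear growth: there exist c > 0 and K > max(a,0) such that φ'(t) ≤ c·t for all t ≥ K. Let r₀ ≥ 0 and let u : [r₀, ω₊) → (a,∞) be a C² solution of the rotational [φ,e₃]-minimal equation u''(r) = (1 + u'(r)²)·(φ'(u(r)) − u'(r)/r) on (r₀, ω₊), maximal to the right, satisfying u'(r) > 0 and u'(r) < r·φ'(u(r)) for all r ∈ (r₀, ω₊). Then ω₊ = +∞. -/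

import Mathlib

open Set Filter
open scoped ENNReal Topology

/-!
If `ω₊ = b < ∞`, then on `[s, b)` with `0 < s` the bound `u' < r φ'(u) ≤ b c (|K| + |u|)` and
Grönwall's inequality bound `u`; hence `u'`, and through the equation also `u''`, are bounded, so
`u` and `u'` have limits at `b`. In the variables `(r, u, u')` the equation is an autonomous
`C¹` system, and Picard–Lindelöf at the limit point continues the solution beyond `b`,
contradicting maximality.
-/

/-- The interval `[r₀, ω)` (all of `[r₀,∞)` when `ω = ∞`). -/
def DomFrom (r₀ : ℝ) (ω : ℝ≥0∞) : Set ℝ := {r : ℝ | r₀ ≤ r ∧ ENNReal.ofReal r < ω}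

section Prod

variable {F G : Type*} [NormedAddCommGroup F] [NormedSpace ℝ F] [NormedAddCommGroup G]
  [NormedSpace ℝ G] {f : ℝ → F × G} {p : F × G} {t : ℝ}

theorem HasDerivAt.fst (h : HasDerivAt f p t) : HasDerivAt (fun s => (f s).1) p.1 t :=
  (hasFDerivAt_fst (𝕜 := ℝ) (p := f t)).comp_hasDerivAt t h

theorem HasDerivAt.snd (h : HasDerivAt f p t) : HasDerivAt (fun s => (f s).2) p.2 t :=
  (hasFDerivAt_snd (𝕜 := ℝ) (p := f t)).comp_hasDerivAt t h

end Prod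

section Continuation

variable {E : Type*} [NormedAddCommGroup E] [NormedSpace ℝ E]

theorem hasDerivAt_ite_lt_of_tendsto {γ γ' ψ : ℝ → E} {a b : ℝ} {q : E} (hab : a < b)
    (hγ : ∀ t ∈ Ioo a b, HasDerivAt γ (γ' t) t)
    (hγ_lim : Tendsto γ (𝓝[<] b) (𝓝 (ψ b))) (hγ'_lim : Tendsto γ' (𝓝[<] b) (𝓝 q))
    (hψ : HasDerivAt ψ q b) :
    HasDerivAt (fun t => if t < b then γ t else ψ t) q b := by
  set η : ℝ → E := fun t => if t < b then γ t else ψ t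
  have hη : ∀ t ∈ Ioo a b, HasDerivAt η (γ' t) t := fun t ht =>
    (hγ t ht).congr_of_eventuallyEq ((eventually_lt_nhds ht.2).mono fun s hs => if_pos hs)
  have hIoo : Ioo a b ∈ 𝓝[<] b := Ioo_mem_nhdsLT hab
  have hleft : HasDerivWithinAt η q (Iic b) b := by
    refine hasDerivWithinAt_Iic_of_tendsto_deriv
      (fun t ht => (hη t ht).differentiableAt.differentiableWithinAt) ?_ hIoo ?_
    · have : η b = ψ b := if_neg (lt_irrefl b)
      rw [ContinuousWithinAt, this]
      exact (hγ_lim.mono_left (nhdsWithin_mono _ Ioo_subset_Iio_self)).congr'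
        (eventually_nhdsWithin_of_forall fun t ht => (if_pos ht.2).symm)
    · exact hγ'_lim.congr' (eventually_of_mem hIoo fun t ht => (hη t ht).deriv.symm)
  have hright : HasDerivWithinAt η q (Ici b) b :=
    hψ.hasDerivWithinAt.congr (fun t ht => if_neg (not_lt.2 ht)) (if_neg (lt_irrefl b))
  simpa [Iic_union_Ici] using hleft.union hright

variable [CompleteSpace E]

theorem exists_hasDerivAt_extension_of_tendsto {f : E → E} {γ : ℝ → E} {a b : ℝ} {p : E}
    {U : Set E} (hab : a < b) (hf : ContDiffAt ℝ 1 f p) (hU : U ∈ 𝓝 p)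
    (hγ : ∀ t ∈ Ioo a b, HasDerivAt γ (f (γ t)) t) (hlim : Tendsto γ (𝓝[<] b) (𝓝 p)) :
    ∃ b' > b, ∃ η : ℝ → E, (∀ t < b, η t = γ t) ∧ (∀ t ∈ Ico b b', η t ∈ U) ∧
      ∀ t ∈ Ioo a b', HasDerivAt η (f (η t)) t := by
  obtain ⟨ψ, hψb, ε, hε, hψ⟩ :=
    hf.exists_forall_mem_closedBall_exists_eq_forall_mem_Ioo_hasDerivAt₀ b
  have hψ_at_b : HasDerivAt ψ (f p) b := hψb ▸ hψ b ⟨by linarith, by linarith⟩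
  obtain ⟨b', ⟨hbb', hb'ε⟩, hb'U⟩ := exists_Ico_subset_of_mem_nhds'
    (hψ_at_b.continuousAt.preimage_mem_nhds (hψb ▸ hU)) (lt_add_of_pos_right b hε)
  refine ⟨b', hbb', fun t => if t < b then γ t else ψ t, fun t ht => if_pos ht,
    fun t ht => ?_, fun t ht => ?_⟩
  · simpa [not_lt.2 ht.1] using hb'U ht
  rcases lt_trichotomy t b with htb | rfl | htb
  · simpa [htb] using (hγ t ⟨ht.1, htb⟩).congr_of_eventuallyEq
      ((eventually_lt_nhds htb).mono fun s hs => if_pos hs)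
  · simpa [hψb] using hasDerivAt_ite_lt_of_tendsto hab hγ (hψb ▸ hlim)
      ((hf.continuousAt.tendsto).comp hlim) hψ_at_b
  · simpa [htb.not_gt] using (hψ t ⟨by linarith, by linarith [ht.2]⟩).congr_of_eventuallyEq
      ((eventually_gt_nhds htb).mono fun s hs => if_neg hs.not_gt)

end Continuation

/-- The rotational equation as an autonomous first-order system in `(r, u, u')`. -/
noncomputable def rotationalField (φ' : ℝ → ℝ) (p : ℝ × ℝ × ℝ) : ℝ × ℝ × ℝ :=
  (1, p.2.2, (1 + p.2.2 ^ 2) * (φ' p.2.1 - p.2.2 / p.1))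

theorem contDiffAt_rotationalField {φ' : ℝ → ℝ} {p : ℝ × ℝ × ℝ} (hp : p.1 ≠ 0)
    (hφ' : ContDiffAt ℝ 1 φ' p.2.1) : ContDiffAt ℝ 1 (rotationalField φ') p := by
  have hφ'p : ContDiffAt ℝ 1 (fun q : ℝ × ℝ × ℝ => φ' q.2.1) p :=
    hφ'.comp p (contDiff_fst.comp contDiff_snd).contDiffAt
  unfold rotationalField
  fun_prop (disch := assumption)

theorem exists_extension_of_tendsto_rotational {φ' u u' : ℝ → ℝ} {S : Set ℝ} {s b x₀ y₀ : ℝ}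
    (hs : 0 < s) (hsb : s < b) (hφ' : ContDiffAt ℝ 1 φ' x₀) (hS : S ∈ 𝓝 x₀)
    (hu : ∀ r ∈ Ioo s b, HasDerivAt u (u' r) r)
    (hu' : ∀ r ∈ Ioo s b, HasDerivAt u' ((1 + u' r ^ 2) * (φ' (u r) - u' r / r)) r)
    (hu_lim : Tendsto u (𝓝[<] b) (𝓝 x₀)) (hu'_lim : Tendsto u' (𝓝[<] b) (𝓝 y₀)) :
    ∃ b' > b, ∃ v v' : ℝ → ℝ, (∀ r < b, v r = u r ∧ v' r = u' r) ∧
      (∀ r ∈ Ico b b', v r ∈ S) ∧ ∀ r ∈ Ioo s b', HasDerivAt v (v' r) r ∧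
        HasDerivAt v' ((1 + v' r ^ 2) * (φ' (v r) - v' r / r)) r := by
  have hlim : Tendsto (fun r => (r, u r, u' r)) (𝓝[<] b) (𝓝 (b, x₀, y₀)) :=
    (tendsto_id.mono_left nhdsWithin_le_nhds).prodMk_nhds (hu_lim.prodMk_nhds hu'_lim)
  obtain ⟨b', hbb', η, hηγ, hηS, hη⟩ := exists_hasDerivAt_extension_of_tendsto hsb
    (contDiffAt_rotationalField (hs.trans hsb).ne' hφ')
    ((continuous_fst.comp continuous_snd).continuousAt.preimage_mem_nhds hS)
    (fun r hr => (hasDerivAt_id r).prodMk ((hu r hr).prodMk (hu' r hr))) hlim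
  have hη_fst : ∀ r ∈ Ioo s b', (η r).1 = r := by
    have hd : ∀ r ∈ Ioo s b', HasDerivAt (fun r => (η r).1 - r) 0 r := fun r hr => by
      have h := (hη r hr).fst.sub (hasDerivAt_id' r)
      rwa [rotationalField, sub_self] at h
    have hm : (s + b) / 2 ∈ Ioo s b' := ⟨by linarith, by linarith⟩
    intro r hr
    have h := isOpen_Ioo.is_const_of_deriv_eq_zero isPreconnected_Ioo
      (fun r hr => (hd r hr).differentiableAt.differentiableWithinAt)
      (fun r hr => (hd r hr).deriv) hr hm
    simp only [hηγ _ (by linarith : (s + b) / 2 < b), id, sub_self] at h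
    linarith
  refine ⟨b', hbb', fun r => (η r).2.1, fun r => (η r).2.2,
    fun r hr => by simp [hηγ r hr], fun r hr => hηS r hr, fun r hr => ?_⟩
  have h := hη r hr
  rw [rotationalField, hη_fst r hr] at h
  exact ⟨h.snd.fst, h.snd.snd⟩

theorem exists_abs_le_of_abs_deriv_le {f f' : ℝ → ℝ} {s b k ε : ℝ} (hk : 0 ≤ k)
    (hε : 0 ≤ ε) (hf : ∀ t ∈ Ico s b, HasDerivAt f (f' t) t)
    (bound : ∀ t ∈ Ico s b, |f' t| ≤ k * |f t| + ε) :
    ∃ M, ∀ t ∈ Ico s b, |f t| ≤ M := by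
  refine ⟨gronwallBound |f s| k ε (b - s), fun t ht => ?_⟩
  have hsub : Icc s t ⊆ Ico s b := Icc_subset_Ico_right ht.2
  calc |f t| ≤ gronwallBound |f s| k ε (t - s) :=
        norm_le_gronwallBound_of_norm_deriv_right_le
          (fun x hx => (hf x (hsub hx)).continuousAt.continuousWithinAt)
          (fun x hx => (hf x (hsub (Ico_subset_Icc_self hx))).hasDerivWithinAt) le_rfl
          (fun x hx => bound x (hsub (Ico_subset_Icc_self hx))) t (right_mem_Icc.2 ht.1)
    _ ≤ gronwallBound |f s| k ε (b - s) :=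
        gronwallBound_mono (abs_nonneg _) hε hk (by linarith [ht.2])

theorem exists_tendsto_nhdsLT_of_abs_deriv_le {f f' : ℝ → ℝ} {a b C : ℝ} (hab : a < b)
    (hf : ∀ t ∈ Ico a b, HasDerivAt f (f' t) t) (bound : ∀ t ∈ Ico a b, |f' t| ≤ C) :
    ∃ L, Tendsto f (𝓝[<] b) (𝓝 L) := by
  have hlip : LipschitzOnWith C.toNNReal f (Ico a b) :=
    (convex_Ico a b).lipschitzOnWith_of_nnnorm_hasDerivWithin_le
      (fun t ht => (hf t ht).hasDerivWithinAt) fun t ht => by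
        rw [← NNReal.coe_le_coe, coe_nnnorm]
        exact (bound t ht).trans (Real.le_coe_toNNReal C)
  obtain ⟨g, hg, hfg⟩ := hlip.extend_real
  exact ⟨g b, (hg.continuous.tendsto b).mono_left nhdsWithin_le_nhds |>.congr'
    (eventually_of_mem (Ico_mem_nhdsLT hab) fun t ht => (hfg ht).symm)⟩

theorem le_mul_abs_add_mul_abs_of_monotoneOn {g : ℝ → ℝ} {S : Set ℝ} {c K x : ℝ}
    (hg : MonotoneOn g S) (hc : 0 ≤ c) (hK : K ∈ S) (hlin : ∀ t, K ≤ t → g t ≤ c * t)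
    (hx : x ∈ S) : g x ≤ c * |K| + c * |x| := by
  rcases le_total x K with hxK | hKx
  · nlinarith [hg hx hK hxK, hlin K le_rfl, le_abs_self K, abs_nonneg x]
  · nlinarith [hlin x hKx, le_abs_self x, abs_nonneg K]

theorem exists_tendsto_nhdsLT_of_rotational {φ' u u' : ℝ → ℝ} {s b A B : ℝ} (hs : 0 < s)
    (hsb : s < b) (hA : 0 ≤ A) (hB : 0 ≤ B)
    (hu : ∀ r ∈ Ico s b, HasDerivAt u (u' r) r)
    (hu' : ∀ r ∈ Ico s b, HasDerivAt u' ((1 + u' r ^ 2) * (φ' (u r) - u' r / r)) r)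
    (hpos : ∀ r ∈ Ico s b, 0 < u' r) (hlt : ∀ r ∈ Ico s b, u' r < r * φ' (u r))
    (hφ' : ∀ r ∈ Ico s b, φ' (u r) ≤ A + B * |u r|) :
    ∃ x₀ y₀, Tendsto u (𝓝[<] b) (𝓝 x₀) ∧ Tendsto u' (𝓝[<] b) (𝓝 y₀) := by
  have hb : 0 ≤ b := (hs.trans hsb).le
  have hr_pos : ∀ r ∈ Ico s b, 0 < r := fun r hr => hs.trans_le hr.1
  have hφ'_pos : ∀ r ∈ Ico s b, 0 < φ' (u r) := fun r hr =>
    pos_of_mul_pos_right ((hpos r hr).trans (hlt r hr)) (hr_pos r hr).le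
  have hu'_le : ∀ r ∈ Ico s b, u' r ≤ b * (A + B * |u r|) := fun r hr =>
    calc u' r ≤ r * φ' (u r) := (hlt r hr).le
      _ ≤ b * (A + B * |u r|) :=
        mul_le_mul hr.2.le (hφ' r hr) (hφ'_pos r hr).le hb
  obtain ⟨M, hM⟩ := exists_abs_le_of_abs_deriv_le (mul_nonneg hb hB) (mul_nonneg hb hA) hu
    fun r hr => by rw [abs_of_pos (hpos r hr)]; linarith [hu'_le r hr]
  set M₁ := b * (A + B * M)
  have hu'_bound : ∀ r ∈ Ico s b, |u' r| ≤ M₁ := fun r hr => by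
    rw [abs_of_pos (hpos r hr)]
    exact (hu'_le r hr).trans (mul_le_mul_of_nonneg_left (by nlinarith [hM r hr]) hb)
  have hu''_bound : ∀ r ∈ Ico s b,
      |(1 + u' r ^ 2) * (φ' (u r) - u' r / r)| ≤ (1 + M₁ ^ 2) * (A + B * M + M₁ / s) := by
    intro r hr
    have h1 : u' r ^ 2 ≤ M₁ ^ 2 := sq_le_sq.2 ((hu'_bound r hr).trans (le_abs_self M₁))
    have h2 : u' r / r ≤ M₁ / s := div_le_div₀ ((abs_nonneg _).trans (hu'_bound r hr))
      (le_of_abs_le (hu'_bound r hr)) hs hr.1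
    have h3 : |φ' (u r) - u' r / r| ≤ A + B * M + M₁ / s := by
      rw [abs_sub_le_iff]
      have := div_pos (hpos r hr) (hr_pos r hr)
      constructor <;> nlinarith [hφ' r hr, hM r hr, hφ'_pos r hr]
    rw [abs_mul, abs_of_pos (by positivity)]
    exact mul_le_mul (by linarith) h3 (abs_nonneg _) (by positivity)
  obtain ⟨x₀, hx₀⟩ := exists_tendsto_nhdsLT_of_abs_deriv_le hsb hu hu'_bound
  obtain ⟨y₀, hy₀⟩ := exists_tendsto_nhdsLT_of_abs_deriv_le hsb hu' hu''_bound
  exact ⟨x₀, y₀, hx₀, hy₀⟩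

structure IsRotationalSolution (φ' : ℝ → ℝ) (S : Set ℝ) (r₀ b : ℝ) (u u' : ℝ → ℝ) :
    Prop where
  mem : ∀ r ∈ Ico r₀ b, u r ∈ S
  hasDerivWithinAt : ∀ r ∈ Ico r₀ b, HasDerivWithinAt u (u' r) (Ico r₀ b) r
  continuousOn : ContinuousOn u' (Ico r₀ b)
  hasDerivAt_deriv : ∀ r ∈ Ioo r₀ b, HasDerivAt u' ((1 + u' r ^ 2) * (φ' (u r) - u' r / r)) r

namespace IsRotationalSolution

variable {φ' u u' v v' : ℝ → ℝ} {S : Set ℝ} {r₀ s b b' : ℝ}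

theorem hasDerivAt (h : IsRotationalSolution φ' S r₀ b u u') {r : ℝ} (hr : r ∈ Ioo r₀ b) :
    HasDerivAt u (u' r) r :=
  (h.hasDerivWithinAt r (Ioo_subset_Ico_self hr)).hasDerivAt (Ico_mem_nhds hr.1 hr.2)

theorem glue (h : IsRotationalSolution φ' S r₀ b u u') (hsb : s < b)
    (hvu : ∀ r < b, v r = u r ∧ v' r = u' r) (hvS : ∀ r ∈ Ico b b', v r ∈ S)
    (hv : ∀ r ∈ Ioo s b', HasDerivAt v (v' r) r ∧
      HasDerivAt v' ((1 + v' r ^ 2) * (φ' (v r) - v' r / r)) r) :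
    IsRotationalSolution φ' S r₀ b' v v' := by
  have hv_ev : ∀ r < b, v =ᶠ[𝓝 r] u := fun r hr =>
    (eventually_lt_nhds hr).mono fun x hx => (hvu x hx).1
  have hv'_ev : ∀ r < b, v' =ᶠ[𝓝 r] u' := fun r hr =>
    (eventually_lt_nhds hr).mono fun x hx => (hvu x hx).2
  have hIco : ∀ r < b, Ico r₀ b ∈ 𝓝[Ico r₀ b'] r := fun r hr =>
    mem_of_superset (inter_mem_nhdsWithin _ (Iio_mem_nhds hr)) fun x hx => ⟨hx.1.1, hx.2⟩
  have hv_right : ∀ r ∈ Ico r₀ b', b ≤ r → r ∈ Ioo s b' := fun r hr hbr =>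
    ⟨hsb.trans_le hbr, hr.2⟩
  refine ⟨fun r hr => ?_, fun r hr => ?_, fun r hr => ?_, fun r hr => ?_⟩
  all_goals rcases lt_or_ge r b with hrb | hbr
  · exact (hvu r hrb).1 ▸ h.mem r ⟨hr.1, hrb⟩
  · exact hvS r ⟨hbr, hr.2⟩
  · rw [(hvu r hrb).2]
    exact ((h.hasDerivWithinAt r ⟨hr.1, hrb⟩).mono_of_mem_nhdsWithin (hIco r hrb))
      |>.congr_of_eventuallyEq (nhdsWithin_le_nhds (hv_ev r hrb)) (hvu r hrb).1
  · exact (hv r (hv_right r hr hbr)).1.hasDerivWithinAt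
  · exact ((h.continuousOn r ⟨hr.1, hrb⟩).mono_of_mem_nhdsWithin (hIco r hrb))
      |>.congr_of_eventuallyEq (nhdsWithin_le_nhds (hv'_ev r hrb)) (hvu r hrb).2
  · exact (hv r (hv_right r hr hbr)).2.continuousAt.continuousWithinAt
  · rw [(hvu r hrb).1, (hvu r hrb).2]
    exact (h.hasDerivAt_deriv r ⟨hr.1, hrb⟩).congr_of_eventuallyEq (hv'_ev r hrb)
  · exact (hv r (hv_right r (Ioo_subset_Ico_self hr) hbr)).2

theorem exists_extension (h : IsRotationalSolution φ' S r₀ b u u') {A B : ℝ}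
    (hS : IsOpen S) (hS_up : ∀ x ∈ S, Ici x ⊆ S) (hr₀ : 0 ≤ r₀) (hb : r₀ < b)
    (hφ' : ContDiffOn ℝ 1 φ' S) (hA : 0 ≤ A) (hB : 0 ≤ B)
    (hφ'_le : ∀ x ∈ S, φ' x ≤ A + B * |x|)
    (hpos : ∀ r ∈ Ioo r₀ b, 0 < u' r) (hlt : ∀ r ∈ Ioo r₀ b, u' r < r * φ' (u r)) :
    ∃ b' > b, ∃ v v' : ℝ → ℝ, v r₀ = u r₀ ∧ v' r₀ = u' r₀ ∧
      IsRotationalSolution φ' S r₀ b' v v' := by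
  obtain ⟨s, hr₀s, hsb⟩ := exists_between hb
  have hIco : Ico s b ⊆ Ioo r₀ b := fun r hr => ⟨hr₀s.trans_le hr.1, hr.2⟩
  obtain ⟨x₀, y₀, hx₀, hy₀⟩ := exists_tendsto_nhdsLT_of_rotational (by linarith) hsb hA hB
    (fun r hr => h.hasDerivAt (hIco hr)) (fun r hr => h.hasDerivAt_deriv r (hIco hr))
    (fun r hr => hpos r (hIco hr)) (fun r hr => hlt r (hIco hr))
    (fun r hr => hφ'_le _ (h.mem r (Ioo_subset_Ico_self (hIco hr))))
  have hu_mono : MonotoneOn u (Ioo r₀ b) :=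
    monotoneOn_of_hasDerivWithinAt_nonneg (convex_Ioo r₀ b)
      (fun r hr => (h.hasDerivAt hr).continuousAt.continuousWithinAt)
      (fun r hr => (h.hasDerivAt (interior_subset hr)).hasDerivWithinAt)
      (fun r hr => (hpos r (interior_subset hr)).le)
  have hx₀S : x₀ ∈ S := hS_up _ (h.mem s ⟨hr₀s.le, hsb⟩) <| ge_of_tendsto hx₀ <|
    eventually_of_mem (Ioo_mem_nhdsLT hsb) fun r hr =>
      hu_mono ⟨hr₀s, hsb⟩ (hIco (Ioo_subset_Ico_self hr)) hr.1.le
  obtain ⟨b', hbb', v, v', hvu, hvS, hv⟩ := exists_extension_of_tendsto_rotational (by linarith) hsb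
    (hφ'.contDiffAt (hS.mem_nhds hx₀S)) (hS.mem_nhds hx₀S)
    (fun r hr => h.hasDerivAt (hIco (Ioo_subset_Ico_self hr)))
    (fun r hr => h.hasDerivAt_deriv r (hIco (Ioo_subset_Ico_self hr))) hx₀ hy₀
  exact ⟨b', hbb', v, v', (hvu r₀ hb).1, (hvu r₀ hb).2, h.glue hsb hvu hvS hv⟩

end IsRotationalSolution

theorem DomFrom_ofReal {r₀ b : ℝ} (hb : 0 < b) :
    DomFrom r₀ (ENNReal.ofReal b) = Ico r₀ b := by
  ext r
  exact and_congr_right fun _ => ENNReal.ofReal_lt_ofReal_iff hb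

theorem stmt_14 (a : EReal) (φ φ' φ'' : ℝ → ℝ)
    (hφsm : ContDiffOn ℝ (⊤ : ℕ∞) φ {t : ℝ | a < (t : EReal)})
    (hφd : ∀ t : ℝ, a < (t : EReal) → HasDerivAt φ (φ' t) t)
    (hφd2 : ∀ t : ℝ, a < (t : EReal) → HasDerivAt φ' (φ'' t) t)
    (hφ''nn : ∀ t : ℝ, a < (t : EReal) → 0 ≤ φ'' t)
    -- at most linear growth of `φ'`
    (c K : ℝ) (hc : 0 < c) (hKa : a < (K : EReal))
    (hlin : ∀ t : ℝ, K ≤ t → φ' t ≤ c * t)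
    (r₀ : ℝ) (hr₀ : 0 ≤ r₀)
    (ω : ℝ≥0∞) (hωr₀ : ENNReal.ofReal r₀ < ω)
    (u u' : ℝ → ℝ)
    (hmem : ∀ r ∈ DomFrom r₀ ω, a < (u r : EReal))
    (hd : ∀ r ∈ DomFrom r₀ ω, HasDerivWithinAt u (u' r) (DomFrom r₀ ω) r)
    (hu'c : ContinuousOn u' (DomFrom r₀ ω))
    (heq : ∀ r ∈ DomFrom r₀ ω, r₀ < r →
      HasDerivAt u' ((1 + u' r ^ 2) * (φ' (u r) - u' r / r)) r)
    (hu'pos : ∀ r ∈ DomFrom r₀ ω, r₀ < r → 0 < u' r)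
    (hu'lt : ∀ r ∈ DomFrom r₀ ω, r₀ < r → u' r < r * φ' (u r))
    -- maximality to the right: no solution with the same data at `r₀` on a larger interval
    (hmax : ∀ ω' : ℝ≥0∞, ω < ω' →
      ¬ ∃ v v' : ℝ → ℝ,
        v r₀ = u r₀ ∧ v' r₀ = u' r₀ ∧
        (∀ r ∈ DomFrom r₀ ω', a < (v r : EReal)) ∧
        (∀ r ∈ DomFrom r₀ ω', HasDerivWithinAt v (v' r) (DomFrom r₀ ω') r) ∧
        ContinuousOn v' (DomFrom r₀ ω') ∧
        (∀ r ∈ DomFrom r₀ ω', r₀ < r →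
          HasDerivAt v' ((1 + v' r ^ 2) * (φ' (v r) - v' r / r)) r)) :
    ω = ⊤ := by
  by_contra hω
  set S := {t : ℝ | a < (t : EReal)}
  have hS : IsOpen S := isOpen_lt continuous_const continuous_coe_real_ereal
  have hS_up : ∀ x ∈ S, Ici x ⊆ S := fun x hx y hy => hx.trans_le (EReal.coe_le_coe_iff.2 hy)
  have hφ'_mono : MonotoneOn φ' S :=
    monotoneOn_of_hasDerivWithinAt_nonneg
      (convex_iff_ordConnected.2 ⟨fun x hx _ _ _ hz => hS_up x hx hz.1⟩)
      (fun t ht => (hφd2 t ht).continuousAt.continuousWithinAt)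
      (fun t ht => (hφd2 t (interior_subset (s := S) ht)).hasDerivWithinAt)
      (fun t ht => hφ''nn t (interior_subset (s := S) ht))
  have hφ'_C1 : ContDiffOn ℝ 1 φ' S :=
    (hφsm.deriv_of_isOpen hS (by norm_cast)).congr fun t ht => (hφd t ht).deriv.symm
  obtain ⟨b, rfl⟩ : ∃ b, ω = ENNReal.ofReal b := ⟨ω.toReal, (ENNReal.ofReal_toReal hω).symm⟩
  have hb : r₀ < b := by
    by_contra! h; exact hωr₀.not_ge (ENNReal.ofReal_le_ofReal h)
  rw [DomFrom_ofReal (hr₀.trans_lt hb)] at hmem hd hu'c heq hu'pos hu'lt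
  have hu : IsRotationalSolution φ' S r₀ b u u' :=
    ⟨hmem, hd, hu'c, fun r hr => heq r (Ioo_subset_Ico_self hr) hr.1⟩
  obtain ⟨b', hbb', v, v', hv₀, hv'₀, hv⟩ := hu.exists_extension
    hS hS_up hr₀ hb hφ'_C1 (by positivity) hc.le
    (fun x hx => le_mul_abs_add_mul_abs_of_monotoneOn hφ'_mono hc.le hKa hlin hx)
    (fun r hr => hu'pos r (Ioo_subset_Ico_self hr) hr.1)
    (fun r hr => hu'lt r (Ioo_subset_Ico_self hr) hr.1)
  have hb' : 0 < b' := by linarith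
  refine hmax (ENNReal.ofReal b') ((ENNReal.ofReal_lt_ofReal_iff hb').2 hbb')
    ⟨v, v', hv₀, hv'₀, ?_⟩
  rw [DomFrom_ofReal hb']
  exact ⟨hv.mem, hv.hasDerivWithinAt, hv.continuousOn,
    fun r hr hr₀r => hv.hasDerivAt_deriv r ⟨hr₀r, hr.2⟩⟩
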